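/- In any nondegenerate triangle with circumcenter O, circumradius R and exradius rₐ opposite to A, the adjoint Nagel point Nₐ satisfies ONₐ² = R² + 4Rrₐ + 4rₐ² = (R + 2rₐ)². -/

import Mathlib

/-! If `x + y + z = σ ≠ 0` and `σ • (P - O) = x • (A - O) + y • (B - O) + z • (C - O)`, Lagrange's
identity gives `σ² OP² = σ² R² - (x y c² + y z a² + z x b²)` whenever `O` is equidistant (at
distance `R`) from `A`, `B`, `C`. For `Nₐ` the weights are `s, c - s, b - s`, so `σ = s - a`, and the
subtracted term is, as a polynomial identity in `a, b, c`, equal to `-(abc (s - a) + 4 S²)`.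
Since `abc = 4RS`, this is `-(s - a)² (4 R rₐ + 4 rₐ²)`. The relation `abc = 4RS` holds because in
the plane `A - O` is determined by its inner products `-c²/2`, `-b²/2` with `B - A`, `C - A`, which
gives `R² · Gram(B - A, C - A) = a²b²c²/4`, and `Gram(B - A, C - A) = 4 S²`. -/

open RealInnerProductSpace

section InnerProductSpace

variable {V : Type*} [NormedAddCommGroup V] [InnerProductSpace ℝ V]

theorem norm_smul_add_smul_add_smul_sq (x y z : ℝ) (u v w : V) :
    ‖x • u + y • v + z • w‖ ^ 2 =
      (x + y + z) * (x * ‖u‖ ^ 2 + y * ‖v‖ ^ 2 + z * ‖w‖ ^ 2) -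
        (x * y * ‖u - v‖ ^ 2 + y * z * ‖v - w‖ ^ 2 + z * x * ‖w - u‖ ^ 2) := by
  simp only [norm_add_sq_real, norm_sub_sq_real, norm_smul, mul_pow, Real.norm_eq_abs, sq_abs,
    inner_add_left, inner_smul_left, inner_smul_right, RCLike.conj_to_real]
  rw [real_inner_comm u w]
  ring

theorem sq_dist_of_smul_sub_eq {O P A B C : V} {x y z R : ℝ}
    (hA : dist O A = R) (hB : dist O B = R) (hC : dist O C = R)
    (hP : (x + y + z) • (P - O) = x • (A - O) + y • (B - O) + z • (C - O)) :
    (x + y + z) ^ 2 * dist O P ^ 2 =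
      (x + y + z) ^ 2 * R ^ 2 -
        (x * y * dist A B ^ 2 + y * z * dist B C ^ 2 + z * x * dist C A ^ 2) := by
  rw [dist_comm] at hA hB hC
  have h := norm_smul_add_smul_add_smul_sq x y z (A - O) (B - O) (C - O)
  simp only [← hP, norm_smul, mul_pow, Real.norm_eq_abs, sq_abs, sub_sub_sub_cancel_right,
    ← dist_eq_norm, hA, hB, hC] at h
  rw [dist_comm, h]
  ring

end InnerProductSpace

theorem sq_norm_mul_gram_fin_two (u v w : EuclideanSpace ℝ (Fin 2)) :
    ‖w‖ ^ 2 * (‖u‖ ^ 2 * ‖v‖ ^ 2 - ⟪u, v⟫ ^ 2) = ‖⟪w, u⟫ • v - ⟪w, v⟫ • u‖ ^ 2 := by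
  simp only [EuclideanSpace.norm_sq_eq, EuclideanSpace.inner_eq_star_dotProduct, dotProduct,
    Fin.sum_univ_two, Real.norm_eq_abs, sq_abs, Pi.star_apply, star_trivial, PiLp.sub_apply,
    PiLp.smul_apply, smul_eq_mul]
  ring

theorem sq_circumradius_mul_of_norm_add_eq {p q w : EuclideanSpace ℝ (Fin 2)} {R : ℝ}
    (hw : ‖w‖ = R) (hp : ‖w + p‖ = R) (hq : ‖w + q‖ = R) :
    R ^ 2 * (4 * ‖p‖ ^ 2 * ‖q‖ ^ 2 - (‖p‖ ^ 2 + ‖q‖ ^ 2 - ‖p - q‖ ^ 2) ^ 2) =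
      ‖p - q‖ ^ 2 * ‖q‖ ^ 2 * ‖p‖ ^ 2 := by
  have hwp : ⟪w, p⟫ = -‖p‖ ^ 2 / 2 := by
    have := norm_add_sq_real w p
    rw [hp, hw] at this
    linarith
  have hwq : ⟪w, q⟫ = -‖q‖ ^ 2 / 2 := by
    have := norm_add_sq_real w q
    rw [hq, hw] at this
    linarith
  have hpq : ⟪p, q⟫ = (‖p‖ ^ 2 + ‖q‖ ^ 2 - ‖p - q‖ ^ 2) / 2 := by
    linarith [norm_sub_sq_real p q]
  have hgram := sq_norm_mul_gram_fin_two p q w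
  rw [norm_sub_sq_real, norm_smul, norm_smul, inner_smul_left, inner_smul_right, hw, hwp, hwq,
    real_inner_comm p q, hpq] at hgram
  simp only [Real.norm_eq_abs, mul_pow, sq_abs, RCLike.conj_to_real] at hgram
  linear_combination 4 * hgram

theorem sq_circumradius_mul (A B C O : EuclideanSpace ℝ (Fin 2)) {R : ℝ}
    (hA : dist O A = R) (hB : dist O B = R) (hC : dist O C = R) :
    R ^ 2 * (4 * dist A B ^ 2 * dist C A ^ 2 - (dist A B ^ 2 + dist C A ^ 2 - dist B C ^ 2) ^ 2) =
      dist B C ^ 2 * dist C A ^ 2 * dist A B ^ 2 := by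
  rw [dist_comm] at hA hB hC
  have h := sq_circumradius_mul_of_norm_add_eq (p := B - A) (q := C - A) (w := A - O) (R := R)
    (by rwa [← dist_eq_norm]) (by rwa [sub_add_sub_cancel', ← dist_eq_norm])
    (by rwa [sub_add_sub_cancel', ← dist_eq_norm])
  rwa [sub_sub_sub_cancel_right, ← dist_eq_norm, ← dist_eq_norm, ← dist_eq_norm,
    dist_comm B A] at h

section Heron

variable {P : Type*} [MetricSpace P] {a b c s : ℝ}

theorem heron_radicand_nonneg (A B C : P) (ha : a = dist B C) (hb : b = dist C A)
    (hc : c = dist A B) (hs : s = (a + b + c) / 2) :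
    0 ≤ s * (s - a) * (s - b) * (s - c) := by
  have hsa : 0 ≤ s - a := by
    linarith [dist_triangle B A C, dist_comm A B, dist_comm A C]
  have hsb : 0 ≤ s - b := by
    linarith [dist_triangle C B A, dist_comm B C, dist_comm A B]
  have hsc : 0 ≤ s - c := by
    linarith [dist_triangle A C B, dist_comm C A, dist_comm B C]
  have : 0 ≤ s := by linarith
  positivity

theorem four_mul_circumradius_mul_sqrt_heron (A B C O : EuclideanSpace ℝ (Fin 2)) {R : ℝ}
    (ha : a = dist B C) (hb : b = dist C A) (hc : c = dist A B) (hs : s = (a + b + c) / 2)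
    (hA : dist O A = R) (hB : dist O B = R) (hC : dist O C = R) :
    4 * R * √(s * (s - a) * (s - b) * (s - c)) = a * b * c := by
  have hR : 0 ≤ R := hA ▸ dist_nonneg
  have habc : 0 ≤ a * b * c := by rw [ha, hb, hc]; positivity
  rw [← sq_eq_sq₀ (by positivity) habc, mul_pow, Real.sq_sqrt (heron_radicand_nonneg A B C ha hb hc hs)]
  subst ha hb hc hs
  linear_combination sq_circumradius_mul A B C O hA hB hC

end Heron

/-- in any nondegenerate triangle with circumcenter `O`, circumradius `R` and
exradius `rₐ` opposite `A`, the adjoint Nagel point `Nₐ` satisfies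
`ONₐ² = R² + 4Rrₐ + 4rₐ² = (R + 2rₐ)²`. -/
theorem stmt_14 (A B C O Na : EuclideanSpace ℝ (Fin 2)) (a b c s S R ra : ℝ)
    (hABC : AffineIndependent ℝ ![A, B, C])
    (ha : a = dist B C) (hb : b = dist C A) (hc : c = dist A B)
    (hs : s = (a + b + c) / 2)
    (hS : S = Real.sqrt (s * (s - a) * (s - b) * (s - c)))
    (hra : ra = S / (s - a))
    (hOA : dist O A = R) (hOB : dist O B = R) (hOC : dist O C = R)
    (hNa : ∀ M : EuclideanSpace ℝ (Fin 2),
      (s + (c - s) + (b - s)) • (Na - M) =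
        s • (A - M) + (c - s) • (B - M) + (b - s) • (C - M)) :
    dist O Na ^ 2 = R ^ 2 + 4 * R * ra + 4 * ra ^ 2 ∧ dist O Na ^ 2 = (R + 2 * ra) ^ 2 := by
  have hsa : s - a ≠ 0 := by
    have : dist B C < dist B A + dist A C :=
      dist_lt_dist_add_dist_iff.mpr (by simpa using hABC.not_wbtw_of_injective 1 0 2 (by decide))
    linarith [dist_comm A B, dist_comm A C]
  have hON := sq_dist_of_smul_sub_eq hOA hOB hOC (hNa O)
  rw [← ha, ← hb, ← hc] at hON
  have hS2 : S ^ 2 = s * (s - a) * (s - b) * (s - c) :=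
    hS ▸ Real.sq_sqrt (heron_radicand_nonneg A B C ha hb hc hs)
  have hRS : 4 * R * S = a * b * c :=
    hS ▸ four_mul_circumradius_mul_sqrt_heron A B C O ha hb hc hs hOA hOB hOC
  have main : dist O Na ^ 2 = R ^ 2 + 4 * R * ra + 4 * ra ^ 2 := by
    rw [hra]
    field_simp
    subst hs
    linear_combination hON + ((a - b - c) / 2) * hRS - 4 * hS2
  exact ⟨main, main.trans (by ring)⟩
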